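/- arXiv:2410.09165 — 2 statements merged into one kernel-verified Lean document; each statement's English description precedes it below -/
import Mathlib

section
/- Let {x_k} be generated by the TRFD algorithm and suppose T ≥ 2 satisfies ψ_{p,Δ_*}(x_k) > ε for k = 0,...,T−1 (equivalently, 2 ≤ T ≤ T_g(ε)). Then the number of iterations of types U¹ and U³ among {0,...,T−1} satisfies |(U¹ ∪ U³) ∩ {0,...,T−1}| ≤ ⌈|log₂(τ_0 √n / Δ_min(ε))|⌉, where Δ_min(ε) := (1−α)θε / (4 L_{h,p} max{σ, L_J} c_{p,2}(m) c_{2,p}(n)²). -/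
open scoped ENNReal

noncomputable section

/-- The `p`-norm on `ℝ^n`, for `p ∈ [1,∞]`. -/
def pNorm (p : ℝ≥0∞) {n : ℕ} (x : Fin n → ℝ) : ℝ :=
  if p = ∞ then ⨆ i, |x i| else (∑ i, |x i| ^ p.toReal) ^ (1 / p.toReal)

/-- The Euclidean norm on `ℝ^n`. -/
def eucNorm {n : ℕ} (x : Fin n → ℝ) : ℝ := Real.sqrt (∑ i, x i ^ 2)

/-- The operator norm of a matrix, induced by Euclidean norms. -/
def opNorm2 {m n : ℕ} (A : Matrix (Fin m) (Fin n) ℝ) : ℝ :=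
  sSup ((fun v => eucNorm (A.mulVec v)) '' {v | eucNorm v ≤ 1})

/-- Forward finite-difference approximation of the Jacobian of `F` at `x` with stepsize `τ`:
the `j`-th column is `(F (x + τ e_j) - F x) / τ`. -/
def fdMatrix {n m : ℕ} (F : (Fin n → ℝ) → (Fin m → ℝ)) (x : Fin n → ℝ) (τ : ℝ) :
    Matrix (Fin m) (Fin n) ℝ :=
  Matrix.of fun i j => (F (x + Pi.single j τ) i - F x i) / τ

/-- Stationarity measure `ψ_{p,r}(x)`. -/
def psi {n m : ℕ} (Ω : Set (Fin n → ℝ)) (F : (Fin n → ℝ) → (Fin m → ℝ))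
    (h : (Fin m → ℝ) → ℝ) (J : (Fin n → ℝ) → Matrix (Fin m) (Fin n) ℝ)
    (p : ℝ≥0∞) (r : ℝ) (x : Fin n → ℝ) : ℝ :=
  r⁻¹ * (h (F x) -
    sInf ((fun s => h (F x + (J x).mulVec s)) '' {s | x + s ∈ Ω ∧ pNorm p s ≤ r}))

/-- Approximate stationarity measure `η_{p,r}(x; A)`. -/
def eta {n m : ℕ} (Ω : Set (Fin n → ℝ)) (F : (Fin n → ℝ) → (Fin m → ℝ))
    (h : (Fin m → ℝ) → ℝ) (p : ℝ≥0∞) (r : ℝ) (x : Fin n → ℝ)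
    (A : Matrix (Fin m) (Fin n) ℝ) : ℝ :=
  r⁻¹ * (h (F x) -
    sInf ((fun s => h (F x + A.mulVec s)) '' {s | x + s ∈ Ω ∧ pNorm p s ≤ r}))

/-- The TRFD algorithm: `x`, `τ`, `Δ`, `A`, `d`, `ρ` are the iterates, finite-difference
stepsizes, trust-region radii, finite-difference Jacobian approximations, trial steps and
ratios generated by TRFD with parameters `ε, σ, α, θ, Δstar` from the point `x 0`. -/
def TRFDrun {n m : ℕ} (Ω : Set (Fin n → ℝ)) (F : (Fin n → ℝ) → (Fin m → ℝ))
    (h : (Fin m → ℝ) → ℝ) (p : ℝ≥0∞)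
    (Lh cpm cnp ε σ α θ Δstar : ℝ)
    (x : ℕ → Fin n → ℝ) (τ Δ : ℕ → ℝ) (A : ℕ → Matrix (Fin m) (Fin n) ℝ)
    (d : ℕ → Fin n → ℝ) (ρ : ℕ → ℝ) : Prop :=
  x 0 ∈ Ω ∧
  τ 0 = ε / (Lh * σ * cpm * cnp * Real.sqrt n) ∧
  τ 0 * Real.sqrt n ≤ Δ 0 ∧ Δ 0 ≤ Δstar ∧
  (∀ k, A k = fdMatrix F (x k) (τ k)) ∧
  (∀ k,
    -- unsuccessful iteration of type I
    (eta Ω F h p Δstar (x k) (A k) < ε / 2 ∧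
      x (k + 1) = x k ∧ Δ (k + 1) = Δ k ∧ τ (k + 1) = τ k / 2) ∨
    (ε / 2 ≤ eta Ω F h p Δstar (x k) (A k) ∧
      -- the trial step is feasible and achieves a `θ`-fraction of the optimal model decrease
      pNorm p (d k) ≤ Δ k ∧ x k + d k ∈ Ω ∧
      θ * (h (F (x k)) -
          sInf ((fun s => h (F (x k) + (A k).mulVec s)) ''
            {s | x k + s ∈ Ω ∧ pNorm p s ≤ Δ k})) ≤
        h (F (x k)) - h (F (x k) + (A k).mulVec (d k)) ∧
      ρ k = (h (F (x k)) - h (F (x k + d k))) /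
            (h (F (x k)) - h (F (x k) + (A k).mulVec (d k))) ∧
      -- successful iteration
      ((α ≤ ρ k ∧ x (k + 1) = x k + d k ∧ Δ (k + 1) = min (2 * Δ k) Δstar ∧
          τ (k + 1) = τ k) ∨
      -- unsuccessful iteration of type II
       (ρ k < α ∧ τ k * Real.sqrt n ≤ Δ k / 2 ∧
          x (k + 1) = x k ∧ Δ (k + 1) = Δ k / 2 ∧ τ (k + 1) = τ k) ∨
      -- unsuccessful iteration of type III
       (ρ k < α ∧ Δ k / 2 < τ k * Real.sqrt n ∧
          x (k + 1) = x k ∧ Δ (k + 1) = Δ k / 2 ∧ τ (k + 1) = τ k / 2))))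


/-!
Every iteration of type U¹ or U³ halves `τ_k` and no other iteration changes it, so
`τ_k = τ_0 / 2 ^ N_k` with `N_k` the number of such iterations before `k`. Such an iteration
only happens while `τ_k √n > Δ_min(ε)`. For U¹, `ψ > ε` but `η < ε / 2`, and `|ψ - η|` is
controlled by the finite-difference error `‖J_F(x_k) - A_k‖_F ≤ √n L_J τ_k / 2`. For U³, the
model decrease is at least `θ ε Δ_k / 2` (convexity makes `r ↦ r η_{p,r}` concave), while the
Taylor and finite-difference errors bound the gap between model and actual decrease by
`L_{h,p} c_{p,2} L_J c_{2,p}² Δ_k²`; a rejected step thus forces `Δ_k > 2 Δ_min(ε)`, and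
`Δ_k / 2 < τ_k √n`. The last of `N` halvings then gives `2 ^ (N - 1) < τ_0 √n / Δ_min(ε)`.
-/


open Finset Matrix

section Norms

variable {k l : ℕ}

lemma eucNorm_eq_norm (x : Fin k → ℝ) :
    eucNorm x = ‖(EuclideanSpace.equiv (Fin k) ℝ).symm x‖ := by
  simp [EuclideanSpace.norm_eq, eucNorm, sq_abs]

lemma eucNorm_nonneg (x : Fin k → ℝ) : 0 ≤ eucNorm x := Real.sqrt_nonneg _

lemma eucNorm_sub_le (x y : Fin k → ℝ) : eucNorm (x - y) ≤ eucNorm x + eucNorm y := by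
  simpa only [eucNorm_eq_norm, map_sub] using norm_sub_le _ _

lemma eucNorm_smul (c : ℝ) (x : Fin k → ℝ) : eucNorm (c • x) = |c| * eucNorm x := by
  simp only [eucNorm_eq_norm, map_smul, norm_smul, Real.norm_eq_abs]

lemma eucNorm_single (j : Fin k) {t : ℝ} (ht : 0 ≤ t) : eucNorm (Pi.single j t) = t := by
  rw [eucNorm, sum_eq_single j (fun i _ hi => by simp [hi]) (by simp)]
  simp [Real.sqrt_sq ht]

lemma toReal_pos_of_one_le {p : ℝ≥0∞} (hp : 1 ≤ p) (hp' : p ≠ ∞) : 0 < p.toReal :=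
  ENNReal.toReal_pos (zero_lt_one.trans_le hp).ne' hp'

lemma pNorm_zero {p : ℝ≥0∞} (hp : 1 ≤ p) : pNorm p (0 : Fin k → ℝ) = 0 := by
  by_cases hp' : p = ∞
  · simp [pNorm, hp']
  · have hq := toReal_pos_of_one_le hp hp'
    simp [pNorm, hp', Real.zero_rpow hq.ne', Real.zero_rpow (inv_pos.2 hq).ne']

lemma pNorm_smul_of_nonneg {p : ℝ≥0∞} (hp : 1 ≤ p) {c : ℝ} (hc : 0 ≤ c) (x : Fin k → ℝ) :
    pNorm p (c • x) = c * pNorm p x := by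
  by_cases hp' : p = ∞
  · simp [pNorm, hp', abs_mul, abs_of_nonneg hc, Real.mul_iSup_of_nonneg hc]
  · have hq := toReal_pos_of_one_le hp hp'
    simp only [pNorm, hp', if_false, Pi.smul_apply, smul_eq_mul, abs_mul, abs_of_nonneg hc,
      Real.mul_rpow hc (abs_nonneg _), ← mul_sum]
    rw [Real.mul_rpow (by positivity) (by positivity), ← Real.rpow_mul hc,
      mul_one_div_cancel hq.ne', Real.rpow_one]

def frob (A : Matrix (Fin l) (Fin k) ℝ) : ℝ := Real.sqrt (∑ i, ∑ j, A i j ^ 2)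

lemma frob_nonneg (A : Matrix (Fin l) (Fin k) ℝ) : 0 ≤ frob A := Real.sqrt_nonneg _

lemma eucNorm_mulVec_le_frob (A : Matrix (Fin l) (Fin k) ℝ) (v : Fin k → ℝ) :
    eucNorm (A *ᵥ v) ≤ frob A * eucNorm v := by
  rw [eucNorm, frob, eucNorm, ← Real.sqrt_mul (by positivity), sum_mul]
  exact Real.sqrt_le_sqrt <| sum_le_sum fun i _ =>
    sum_mul_sq_le_sq_mul_sq univ (A i) v

lemma frob_le_sqrt_mul_of_eucNorm_col_le (A : Matrix (Fin l) (Fin k) ℝ) {c : ℝ} (hc : 0 ≤ c)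
    (hcol : ∀ j, eucNorm (fun i => A i j) ≤ c) : frob A ≤ Real.sqrt k * c := by
  have hsq : ∀ j, ∑ i, A i j ^ 2 ≤ c ^ 2 := fun j => by
    simpa [eucNorm, Real.sqrt_le_left hc] using hcol j
  calc frob A = Real.sqrt (∑ j, ∑ i, A i j ^ 2) := by rw [frob, sum_comm]
    _ ≤ Real.sqrt (∑ _j : Fin k, c ^ 2) := Real.sqrt_le_sqrt (sum_le_sum fun j _ => hsq j)
    _ = Real.sqrt k * c := by simp [Real.sqrt_mul, Real.sqrt_sq hc]

lemma eucNorm_mulVec_le_opNorm2 (A : Matrix (Fin l) (Fin k) ℝ) (v : Fin k → ℝ) :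
    eucNorm (A *ᵥ v) ≤ opNorm2 A * eucNorm v := by
  have hbdd : BddAbove ((fun v => eucNorm (A *ᵥ v)) '' {v | eucNorm v ≤ 1}) := by
    refine ⟨frob A, ?_⟩
    rintro _ ⟨w, hw, rfl⟩
    exact (eucNorm_mulVec_le_frob A w).trans (mul_le_of_le_one_right (frob_nonneg A) hw)
  rcases (eucNorm_nonneg v).eq_or_lt with hv | hv
  · simpa [← hv] using eucNorm_mulVec_le_frob A v
  · have hunit : eucNorm ((eucNorm v)⁻¹ • v) ≤ 1 := by
      rw [eucNorm_smul, abs_inv, abs_of_pos hv, inv_mul_cancel₀ hv.ne']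
    have : eucNorm (A *ᵥ ((eucNorm v)⁻¹ • v)) ≤ opNorm2 A := le_csSup hbdd ⟨_, hunit, rfl⟩
    rw [mulVec_smul, eucNorm_smul, abs_inv, abs_of_pos hv, inv_mul_le_iff₀ hv] at this
    linarith

end Norms

lemma norm_sub_sub_deriv_le_of_norm_deriv_sub_le {E : Type*} [NormedAddCommGroup E]
    [NormedSpace ℝ E] {g g' : ℝ → E} {C : ℝ} (hg : ∀ t, HasDerivAt g (g' t) t)
    (hC : ∀ t ∈ Set.Ico (0 : ℝ) 1, ‖g' t - g' 0‖ ≤ C * t) :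
    ‖g 1 - g 0 - g' 0‖ ≤ C / 2 := by
  have hr : ∀ t, HasDerivAt (fun t => g t - g 0 - t • g' 0) (g' t - g' 0) t := fun t => by
    simpa using ((hg t).sub_const (g 0)).fun_sub ((hasDerivAt_id t).smul_const (g' 0))
  have hB : ∀ t : ℝ, HasDerivAt (fun t => C / 2 * t ^ 2) (C * t) t := fun t =>
    ((hasDerivAt_pow 2 t).const_mul (C / 2)).congr_deriv (by push_cast; ring)
  simpa using image_norm_le_of_norm_deriv_right_le_deriv_boundary
    (fun t _ => (hr t).continuousAt.continuousWithinAt) (fun t _ => (hr t).hasDerivWithinAt)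
    (by simp) hB hC (Set.right_mem_Icc.2 zero_le_one)

section Taylor

variable {n m : ℕ} {F : (Fin n → ℝ) → (Fin m → ℝ)} {J : (Fin n → ℝ) → Matrix (Fin m) (Fin n) ℝ}
  {LJ : ℝ}

lemma eucNorm_sub_sub_mulVec_le
    (hJ : ∀ y, HasFDerivAt F (LinearMap.toContinuousLinearMap (Matrix.mulVecLin (J y))) y)
    (hLip : ∀ y z v, eucNorm ((J y - J z) *ᵥ v) ≤ LJ * eucNorm (y - z) * eucNorm v)
    (a d : Fin n → ℝ) :
    eucNorm (F (a + d) - F a - J a *ᵥ d) ≤ LJ / 2 * eucNorm d ^ 2 := by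
  set ι := (EuclideanSpace.equiv (Fin m) ℝ).symm
  have hline : ∀ t : ℝ, HasDerivAt (fun t : ℝ => a + t • d) d t := fun t => by
    simpa using ((hasDerivAt_id t).smul_const d).const_add a
  have hg : ∀ t : ℝ, HasDerivAt (fun t => ι (F (a + t • d))) (ι (J (a + t • d) *ᵥ d)) t :=
    fun t => by
      simpa [Function.comp_def] using
        ι.toContinuousLinearMap.hasFDerivAt.comp_hasDerivAt t ((hJ _).comp_hasDerivAt t (hline t))
  have hC : ∀ t ∈ Set.Ico (0 : ℝ) 1, ‖ι (J (a + t • d) *ᵥ d) - ι (J (a + (0 : ℝ) • d) *ᵥ d)‖ ≤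
      LJ * eucNorm d ^ 2 * t := fun t ht => by
    have := hLip (a + t • d) a d
    rw [add_sub_cancel_left, eucNorm_smul, abs_of_nonneg ht.1, sub_mulVec] at this
    rw [zero_smul, add_zero, ← map_sub, ← eucNorm_eq_norm]
    linarith
  have := norm_sub_sub_deriv_le_of_norm_deriv_sub_le hg hC
  rw [one_smul, zero_smul, add_zero, ← map_sub, ← map_sub, ← eucNorm_eq_norm] at this
  linarith

end Taylor

section FiniteDifference

variable {n m : ℕ} {F : (Fin n → ℝ) → (Fin m → ℝ)} {J : (Fin n → ℝ) → Matrix (Fin m) (Fin n) ℝ}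
  {LJ : ℝ}

lemma frob_fdMatrix_sub_le
    (hJ : ∀ y, HasFDerivAt F (LinearMap.toContinuousLinearMap (Matrix.mulVecLin (J y))) y)
    (hLJ : 0 ≤ LJ)
    (hLip : ∀ y z v, eucNorm ((J y - J z) *ᵥ v) ≤ LJ * eucNorm (y - z) * eucNorm v)
    (x : Fin n → ℝ) {τ : ℝ} (hτ : 0 < τ) :
    frob (fdMatrix F x τ - J x) ≤ Real.sqrt n * (LJ / 2 * τ) := by
  refine frob_le_sqrt_mul_of_eucNorm_col_le _ (by positivity) fun j => ?_
  have hcol : (fun i => (fdMatrix F x τ - J x) i j) =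
      τ⁻¹ • (F (x + Pi.single j τ) - F x - J x *ᵥ Pi.single j τ) := by
    ext i
    simp only [fdMatrix, Matrix.sub_apply, of_apply, mulVec_single, op_smul_eq_smul,
      Pi.smul_apply, Pi.sub_apply, col_apply, smul_eq_mul]
    field_simp
  have := eucNorm_sub_sub_mulVec_le hJ hLip x (Pi.single j τ)
  rw [eucNorm_single j hτ.le] at this
  rw [hcol, eucNorm_smul, abs_inv, abs_of_pos hτ, inv_mul_le_iff₀ hτ]
  linarith

lemma eucNorm_sub_fdModel_le
    (hJ : ∀ y, HasFDerivAt F (LinearMap.toContinuousLinearMap (Matrix.mulVecLin (J y))) y)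
    (hLJ : 0 ≤ LJ)
    (hLip : ∀ y z v, eucNorm ((J y - J z) *ᵥ v) ≤ LJ * eucNorm (y - z) * eucNorm v)
    (x d : Fin n → ℝ) {τ : ℝ} (hτ : 0 < τ) :
    eucNorm (F (x + d) - (F x + fdMatrix F x τ *ᵥ d)) ≤
      LJ / 2 * eucNorm d ^ 2 + Real.sqrt n * (LJ / 2 * τ) * eucNorm d := by
  have hsplit : F (x + d) - (F x + fdMatrix F x τ *ᵥ d) =
      (F (x + d) - F x - J x *ᵥ d) - (fdMatrix F x τ - J x) *ᵥ d := by
    rw [sub_mulVec]; abel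
  rw [hsplit]
  refine (eucNorm_sub_le _ _).trans (add_le_add (eucNorm_sub_sub_mulVec_le hJ hLip x d) ?_)
  exact (eucNorm_mulVec_le_frob _ d).trans <| mul_le_mul_of_nonneg_right
    (frob_fdMatrix_sub_le hJ hLJ hLip x hτ) (eucNorm_nonneg d)

end FiniteDifference

section Model

variable {n m : ℕ} (Ω : Set (Fin n → ℝ)) (h : (Fin m → ℝ) → ℝ) (p : ℝ≥0∞)

def modelValues (z : Fin m → ℝ) (A : Matrix (Fin m) (Fin n) ℝ) (x : Fin n → ℝ) (r : ℝ) :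
    Set ℝ :=
  (fun s => h (z + A *ᵥ s)) '' {s | x + s ∈ Ω ∧ pNorm p s ≤ r}

/-- `r * η_{p,r}(x; A)` when `z = F x`, and `r * ψ_{p,r}(x)` when moreover `A = J x`. -/
def modelDecrease (z : Fin m → ℝ) (A : Matrix (Fin m) (Fin n) ℝ) (x : Fin n → ℝ) (r : ℝ) : ℝ :=
  h z - sInf (modelValues Ω h p z A x r)

variable {Ω h p} {K cnp : ℝ}

lemma le_add_frob_mul_of_pNorm_le (hK0 : 0 ≤ K) (hK : ∀ z w, |h z - h w| ≤ K * eucNorm (z - w))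
    (hcnp0 : 0 ≤ cnp) (hcnp : ∀ v : Fin n → ℝ, eucNorm v ≤ cnp * pNorm p v)
    (z : Fin m → ℝ) (A B : Matrix (Fin m) (Fin n) ℝ) {s : Fin n → ℝ} {r : ℝ}
    (hs : pNorm p s ≤ r) :
    h (z + A *ᵥ s) ≤ h (z + B *ᵥ s) + K * cnp * frob (A - B) * r := by
  have hdiff : z + A *ᵥ s - (z + B *ᵥ s) = (A - B) *ᵥ s := by rw [sub_mulVec]; abel
  have hAB := (abs_le.1 (hK (z + A *ᵥ s) (z + B *ᵥ s))).2
  rw [hdiff] at hAB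
  have : eucNorm ((A - B) *ᵥ s) ≤ frob (A - B) * (cnp * r) :=
    (eucNorm_mulVec_le_frob _ s).trans <| mul_le_mul_of_nonneg_left
      ((hcnp s).trans (mul_le_mul_of_nonneg_left hs hcnp0)) (frob_nonneg _)
  linarith [mul_le_mul_of_nonneg_left this hK0]

lemma zero_mem_feasible (hp : 1 ≤ p) {x : Fin n → ℝ} (hx : x ∈ Ω) {r : ℝ} (hr : 0 ≤ r) :
    (0 : Fin n → ℝ) ∈ {s | x + s ∈ Ω ∧ pNorm p s ≤ r} :=
  ⟨by rwa [add_zero], by rwa [pNorm_zero hp]⟩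

lemma bddBelow_modelValues (hK0 : 0 ≤ K) (hK : ∀ z w, |h z - h w| ≤ K * eucNorm (z - w))
    (hcnp0 : 0 ≤ cnp) (hcnp : ∀ v : Fin n → ℝ, eucNorm v ≤ cnp * pNorm p v)
    (z : Fin m → ℝ) (A : Matrix (Fin m) (Fin n) ℝ) (x : Fin n → ℝ) (r : ℝ) :
    BddBelow (modelValues Ω h p z A x r) := by
  refine ⟨h z - K * cnp * frob (0 - A) * r, ?_⟩
  rintro _ ⟨s, ⟨-, hs⟩, rfl⟩
  have := le_add_frob_mul_of_pNorm_le hK0 hK hcnp0 hcnp z 0 A hs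
  rw [zero_mulVec, add_zero] at this
  linarith

lemma modelDecrease_le_add_frob_mul (hp : 1 ≤ p) (hK0 : 0 ≤ K)
    (hK : ∀ z w, |h z - h w| ≤ K * eucNorm (z - w))
    (hcnp0 : 0 ≤ cnp) (hcnp : ∀ v : Fin n → ℝ, eucNorm v ≤ cnp * pNorm p v)
    (z : Fin m → ℝ) (A B : Matrix (Fin m) (Fin n) ℝ) {x : Fin n → ℝ} (hx : x ∈ Ω) {r : ℝ}
    (hr : 0 ≤ r) :
    modelDecrease Ω h p z B x r ≤ modelDecrease Ω h p z A x r + K * cnp * frob (A - B) * r := by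
  have hA := bddBelow_modelValues (Ω := Ω) hK0 hK hcnp0 hcnp z A x r
  have : sInf (modelValues Ω h p z A x r) - K * cnp * frob (A - B) * r ≤
      sInf (modelValues Ω h p z B x r) := by
    refine le_csInf ⟨_, _, zero_mem_feasible hp hx hr, rfl⟩ ?_
    rintro _ ⟨s, hs, rfl⟩
    have := csInf_le hA ⟨s, hs, rfl⟩
    linarith [le_add_frob_mul_of_pNorm_le hK0 hK hcnp0 hcnp z A B hs.2]
  unfold modelDecrease
  linarith

lemma div_mul_modelDecrease_le (hΩ : Convex ℝ Ω) (hh : ConvexOn ℝ Set.univ h) (hp : 1 ≤ p)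
    (hK0 : 0 ≤ K) (hK : ∀ z w, |h z - h w| ≤ K * eucNorm (z - w))
    (hcnp0 : 0 ≤ cnp) (hcnp : ∀ v : Fin n → ℝ, eucNorm v ≤ cnp * pNorm p v)
    (z : Fin m → ℝ) (A : Matrix (Fin m) (Fin n) ℝ) {x : Fin n → ℝ} (hx : x ∈ Ω) {r R : ℝ}
    (hr : 0 < r) (hrR : r ≤ R) :
    r / R * modelDecrease Ω h p z A x R ≤ modelDecrease Ω h p z A x r := by
  set t := r / R
  have ht0 : 0 < t := div_pos hr (hr.trans_le hrR)
  have ht1 : t ≤ 1 := div_le_one_of_le₀ hrR (hr.le.trans hrR)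
  have hbdd := bddBelow_modelValues (Ω := Ω) hK0 hK hcnp0 hcnp z A x r
  have key : (sInf (modelValues Ω h p z A x r) - (1 - t) * h z) / t ≤
      sInf (modelValues Ω h p z A x R) := by
    refine le_csInf ⟨_, _, zero_mem_feasible hp hx (hr.le.trans hrR), rfl⟩ ?_
    rintro _ ⟨s, ⟨hsΩ, hs⟩, rfl⟩
    have hmem : x + t • s ∈ Ω := by
      convert hΩ hx hsΩ (sub_nonneg.2 ht1) ht0.le (by ring) using 1
      module
    have hnorm : pNorm p (t • s) ≤ r := by
      rw [pNorm_smul_of_nonneg hp ht0.le]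
      calc t * pNorm p s ≤ t * R := mul_le_mul_of_nonneg_left hs ht0.le
        _ = r := div_mul_cancel₀ r (hr.trans_le hrR).ne'
    have hconv : h (z + A *ᵥ (t • s)) ≤ (1 - t) * h z + t * h (z + A *ᵥ s) := by
      have hcomb : z + A *ᵥ (t • s) = (1 - t) • z + t • (z + A *ᵥ s) := by
        rw [mulVec_smul]; module
      rw [hcomb]
      exact hh.2 (Set.mem_univ _) (Set.mem_univ _) (sub_nonneg.2 ht1) ht0.le (by ring)
    rw [div_le_iff₀ ht0]
    linarith [csInf_le hbdd ⟨t • s, ⟨hmem, hnorm⟩, rfl⟩]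
  rw [div_le_iff₀ ht0] at key
  unfold modelDecrease
  linarith

end Model

section Iteration

variable {n m : ℕ} {Ω : Set (Fin n → ℝ)} {F : (Fin n → ℝ) → (Fin m → ℝ)}
  {h : (Fin m → ℝ) → ℝ} {J : (Fin n → ℝ) → Matrix (Fin m) (Fin n) ℝ} {p : ℝ≥0∞}
  {K cnp LJ ε : ℝ} {x : Fin n → ℝ} {τ : ℝ}

lemma lt_mul_of_eta_lt_of_lt_psi (hp : 1 ≤ p) (hK0 : 0 ≤ K)
    (hK : ∀ z w, |h z - h w| ≤ K * eucNorm (z - w))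
    (hcnp0 : 0 ≤ cnp) (hcnp : ∀ v : Fin n → ℝ, eucNorm v ≤ cnp * pNorm p v)
    (hJ : ∀ y, HasFDerivAt F (LinearMap.toContinuousLinearMap (Matrix.mulVecLin (J y))) y)
    (hLJ : 0 ≤ LJ)
    (hLip : ∀ y z v, eucNorm ((J y - J z) *ᵥ v) ≤ LJ * eucNorm (y - z) * eucNorm v)
    (hx : x ∈ Ω) (hτ : 0 < τ) {r : ℝ} (hr : 0 < r) (hψ : ε < psi Ω F h J p r x)
    (hη : eta Ω F h p r x (fdMatrix F x τ) < ε / 2) :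
    ε < K * cnp * LJ * (τ * Real.sqrt n) := by
  have hψ' : ε < r⁻¹ * modelDecrease Ω h p (F x) (J x) x r := hψ
  have hη' : r⁻¹ * modelDecrease Ω h p (F x) (fdMatrix F x τ) x r < ε / 2 := hη
  rw [inv_mul_eq_div, lt_div_iff₀ hr] at hψ'
  rw [inv_mul_eq_div, div_lt_iff₀ hr] at hη'
  have hcmp := modelDecrease_le_add_frob_mul hp hK0 hK hcnp0 hcnp (F x) (fdMatrix F x τ) (J x)
    hx hr.le
  have hfrob : ε / 2 < K * cnp * frob (fdMatrix F x τ - J x) :=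
    lt_of_mul_lt_mul_right (by linarith) hr.le
  have := mul_le_mul_of_nonneg_left (frob_fdMatrix_sub_le hJ hLJ hLip x hτ)
    (mul_nonneg hK0 hcnp0)
  linarith

lemma lt_mul_of_ratio_lt (hΩ : Convex ℝ Ω) (hh : ConvexOn ℝ Set.univ h) (hp : 1 ≤ p)
    (hK0 : 0 ≤ K) (hK : ∀ z w, |h z - h w| ≤ K * eucNorm (z - w))
    (hcnp1 : 1 ≤ cnp) (hcnp : ∀ v : Fin n → ℝ, eucNorm v ≤ cnp * pNorm p v)
    (hJ : ∀ y, HasFDerivAt F (LinearMap.toContinuousLinearMap (Matrix.mulVecLin (J y))) y)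
    (hLJ : 0 ≤ LJ)
    (hLip : ∀ y z v, eucNorm ((J y - J z) *ᵥ v) ≤ LJ * eucNorm (y - z) * eucNorm v)
    {α θ Δ R : ℝ} {d : Fin n → ℝ} (hα : α ≤ 1) (hθ : 0 < θ) (hε : 0 < ε)
    (hx : x ∈ Ω) (hτ : 0 < τ) (hΔ : 0 < Δ) (hΔR : Δ ≤ R) (hτΔ : τ * Real.sqrt n ≤ Δ)
    (hη : ε / 2 ≤ eta Ω F h p R x (fdMatrix F x τ)) (hd : pNorm p d ≤ Δ)
    (hθd : θ * modelDecrease Ω h p (F x) (fdMatrix F x τ) x Δ ≤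
      h (F x) - h (F x + fdMatrix F x τ *ᵥ d))
    (hρ : (h (F x) - h (F (x + d))) / (h (F x) - h (F x + fdMatrix F x τ *ᵥ d)) < α) :
    (1 - α) * θ * ε < 2 * K * LJ * cnp ^ 2 * Δ := by
  set A := fdMatrix F x τ
  have hcnp0 : 0 ≤ cnp := zero_le_one.trans hcnp1
  have hmodel : ε / 2 * Δ ≤ modelDecrease Ω h p (F x) A x Δ :=
    calc ε / 2 * Δ ≤ R⁻¹ * modelDecrease Ω h p (F x) A x R * Δ :=
          mul_le_mul_of_nonneg_right hη hΔ.le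
      _ = Δ / R * modelDecrease Ω h p (F x) A x R := by ring
      _ ≤ _ := div_mul_modelDecrease_le hΩ hh hp hK0 hK hcnp0 hcnp (F x) A hx hΔ hΔR
  have hpred : θ * (ε / 2 * Δ) ≤ h (F x) - h (F x + A *ᵥ d) :=
    (mul_le_mul_of_nonneg_left hmodel hθ.le).trans hθd
  have hactual : h (F x) - h (F (x + d)) < α * (h (F x) - h (F x + A *ᵥ d)) :=
    (div_lt_iff₀ (lt_of_lt_of_le (by positivity) hpred)).1 hρ
  have hdΔ : eucNorm d ≤ cnp * Δ := (hcnp d).trans (mul_le_mul_of_nonneg_left hd hcnp0)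
  have herr : eucNorm (F (x + d) - (F x + A *ᵥ d)) ≤ LJ * cnp ^ 2 * Δ ^ 2 := by
    have hsq : eucNorm d ^ 2 ≤ (cnp * Δ) ^ 2 := pow_le_pow_left₀ (eucNorm_nonneg d) hdΔ 2
    have hfd : Real.sqrt n * (LJ / 2 * τ) * eucNorm d ≤ LJ / 2 * Δ * (cnp * Δ) := by
      rw [show Real.sqrt n * (LJ / 2 * τ) = LJ / 2 * (τ * Real.sqrt n) by ring]
      exact mul_le_mul (mul_le_mul_of_nonneg_left hτΔ (by positivity)) hdΔ
        (eucNorm_nonneg d) (by positivity)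
    have hcnp2 : LJ / 2 * Δ ^ 2 * cnp ≤ LJ / 2 * Δ ^ 2 * cnp ^ 2 :=
      mul_le_mul_of_nonneg_left (by nlinarith) (by positivity)
    nlinarith [eucNorm_sub_fdModel_le hJ hLJ hLip x d hτ]
  have hgap : h (F (x + d)) - h (F x + A *ᵥ d) ≤ K * (LJ * cnp ^ 2 * Δ ^ 2) :=
    (le_abs_self _).trans ((hK _ _).trans (mul_le_mul_of_nonneg_left herr hK0))
  have : (1 - α) * θ * ε * Δ < 2 * K * LJ * cnp ^ 2 * Δ * Δ := by
    linarith [mul_le_mul_of_nonneg_left hpred (sub_nonneg.2 hα)]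
  exact lt_of_mul_lt_mul_right this hΔ.le

end Iteration

lemma ncard_le_ceil_logb_of_halving {P : ℕ → Prop} [DecidablePred P] {u : ℕ → ℝ} {c : ℝ}
    {T : ℕ} (hc : 0 < c) (hu : ∀ k, u (k + 1) = if P k then u k / 2 else u k)
    (hP : ∀ k < T, P k → c < u k) :
    ({k | k < T ∧ P k}.ncard : ℤ) ≤ ⌈|Real.logb 2 (u 0 / c)|⌉ := by
  have hpow : ∀ k, u k = u 0 / 2 ^ #{i ∈ range k | P i} := by
    intro k
    induction k with
    | zero => simp
    | succ k ih =>
      rw [hu, range_add_one, filter_insert]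
      split_ifs <;> simp [ih, pow_succ, div_div]
  rw [show {k | k < T ∧ P k} = ↑{i ∈ range T | P i} by ext; simp, Set.ncard_coe_finset]
  induction T with
  | zero => simpa using Int.ceil_nonneg (abs_nonneg _)
  | succ T ih =>
    rw [range_add_one, filter_insert]
    split_ifs with hT
    · have hlt := hP T (lt_add_one T) hT
      rw [hpow T, lt_div_iff₀ (by positivity), ← lt_div_iff₀' hc] at hlt
      have hlog : (#{i ∈ range T | P i} : ℝ) < Real.logb 2 (u 0 / c) := by
        rw [Real.lt_logb_iff_rpow_lt one_lt_two (lt_trans (by positivity) hlt),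
          Real.rpow_natCast]
        exact hlt
      have := Int.lt_ceil.2 (hlog.trans_le (le_abs_self _))
      rw [card_insert_of_notMem (by simp)]
      push_cast
      omega
    · exact ih fun k hk => hP k (hk.trans (lt_add_one T))

namespace TRFDrun

variable {n m : ℕ} {Ω : Set (Fin n → ℝ)} {F : (Fin n → ℝ) → (Fin m → ℝ)}
  {h : (Fin m → ℝ) → ℝ} {p : ℝ≥0∞} {Lh cpm cnp ε σ α θ Δstar : ℝ} {x : ℕ → Fin n → ℝ}
  {τ Δ : ℕ → ℝ} {A : ℕ → Matrix (Fin m) (Fin n) ℝ} {d : ℕ → Fin n → ℝ} {ρ : ℕ → ℝ}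

theorem invariant (hrun : TRFDrun Ω F h p Lh cpm cnp ε σ α θ Δstar x τ Δ A d ρ)
    (hτ0 : 0 < τ 0) (k : ℕ) :
    x k ∈ Ω ∧ 0 < τ k ∧ τ k * Real.sqrt n ≤ Δ k ∧ Δ k ≤ Δstar := by
  obtain ⟨hx0, -, hΔ0, hΔ0s, -, hstep⟩ := hrun
  induction k with
  | zero => exact ⟨hx0, hτ0, hΔ0, hΔ0s⟩
  | succ k ih =>
    obtain ⟨hxk, hτk, hτΔ, hΔs⟩ := ih
    have hΔk : 0 ≤ Δ k := (mul_nonneg hτk.le (Real.sqrt_nonneg n)).trans hτΔ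
    rcases hstep k with ⟨-, hx', hΔ', hτ'⟩ | ⟨-, -, hdΩ, -, -, hcase⟩
    · rw [hx', hΔ', hτ']
      exact ⟨hxk, half_pos hτk, by linarith, hΔs⟩
    rcases hcase with ⟨-, hx', hΔ', hτ'⟩ | ⟨-, hτΔ', hx', hΔ', hτ'⟩ | ⟨-, -, hx', hΔ', hτ'⟩
    · rw [hx', hΔ', hτ']
      exact ⟨hdΩ, hτk, le_min (by linarith) (by linarith), min_le_right _ _⟩
    · rw [hx', hΔ', hτ']
      exact ⟨hxk, hτk, hτΔ', by linarith⟩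
    · rw [hx', hΔ', hτ']
      exact ⟨hxk, half_pos hτk, by linarith, by linarith⟩

theorem tau_succ (hrun : TRFDrun Ω F h p Lh cpm cnp ε σ α θ Δstar x τ Δ A d ρ) (k : ℕ) :
    τ (k + 1) =
      if eta Ω F h p Δstar (x k) (A k) < ε / 2 ∨
          (ε / 2 ≤ eta Ω F h p Δstar (x k) (A k) ∧ ρ k < α ∧ Δ k / 2 < τ k * Real.sqrt n)
      then τ k / 2 else τ k := by
  rcases hrun.2.2.2.2.2 k with ⟨hη, -, -, hτ'⟩ | ⟨hη, -, -, -, -, hcase⟩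
  · rw [if_pos (Or.inl hη), hτ']
  rcases hcase with ⟨hρ, -, -, hτ'⟩ | ⟨-, hτΔ, -, -, hτ'⟩ | ⟨hρ, hτΔ, -, -, hτ'⟩
  · rw [if_neg (by rintro (h | ⟨-, h, -⟩) <;> linarith), hτ']
  · rw [if_neg (by rintro (h | ⟨-, -, h⟩) <;> linarith), hτ']
  · rw [if_pos (Or.inr ⟨hη, hρ, hτΔ⟩), hτ']

end TRFDrun

theorem stmt11_general
    {n m : ℕ} (hn : 1 ≤ n) (p : ℝ≥0∞) (hp : 1 ≤ p)
    (Ω : Set (Fin n → ℝ)) (hΩcv : Convex ℝ Ω)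
    (F : (Fin n → ℝ) → (Fin m → ℝ)) (J : (Fin n → ℝ) → Matrix (Fin m) (Fin n) ℝ)
    (hJ : ∀ y, HasFDerivAt F (LinearMap.toContinuousLinearMap (Matrix.mulVecLin (J y))) y)
    (LJ : ℝ) (hLJ : 0 < LJ)
    (hJLip : ∀ y z, opNorm2 (J y - J z) ≤ LJ * eucNorm (y - z))
    (h : (Fin m → ℝ) → ℝ) (hconv : ConvexOn ℝ Set.univ h)
    (Lh : ℝ) (hLh : 0 < Lh)
    (hhLip : ∀ z w, |h z - h w| ≤ Lh * pNorm p (z - w))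
    (cnp cpm : ℝ) (hcnp1 : 1 ≤ cnp) (hcpm1 : 1 ≤ cpm)
    (hcnp : ∀ v : Fin n → ℝ, eucNorm v ≤ cnp * pNorm p v)
    (hcpm : ∀ z : Fin m → ℝ, pNorm p z ≤ cpm * eucNorm z)
    (ε σ α θ Δstar : ℝ) (hε : 0 < ε) (hσ : 0 < σ)
    (hα0 : 0 < α) (hα1 : α < 1) (hθ0 : 0 < θ) (hθ1 : θ ≤ 1)
    (x : ℕ → Fin n → ℝ) (τ Δ : ℕ → ℝ) (A : ℕ → Matrix (Fin m) (Fin n) ℝ)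
    (d : ℕ → Fin n → ℝ) (ρ : ℕ → ℝ)
    (hrun : TRFDrun Ω F h p Lh cpm cnp ε σ α θ Δstar x τ Δ A d ρ)
    (T : ℕ) (hT : ∀ k < T, ε < psi Ω F h J p Δstar (x k)) :
    (Set.ncard {k : ℕ | k < T ∧
        (eta Ω F h p Δstar (x k) (A k) < ε / 2 ∨
         (ε / 2 ≤ eta Ω F h p Δstar (x k) (A k) ∧ ρ k < α ∧
          Δ k / 2 < τ k * Real.sqrt n))} : ℤ) ≤
      ⌈|Real.logb 2 (τ 0 * Real.sqrt n /
          ((1 - α) * θ * ε / (4 * Lh * max σ LJ * cpm * cnp ^ 2)))|⌉ := by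
  obtain rfl : A = fun k => fdMatrix F (x k) (τ k) := funext hrun.2.2.2.2.1
  have hsn : 0 < Real.sqrt n := Real.sqrt_pos.2 (by exact_mod_cast hn)
  have hτ0 : 0 < τ 0 := by rw [hrun.2.1]; positivity
  have hK : ∀ z w, |h z - h w| ≤ Lh * cpm * eucNorm (z - w) := fun z w =>
    (hhLip z w).trans (by rw [mul_assoc]; exact mul_le_mul_of_nonneg_left (hcpm _) hLh.le)
  have hK0 : 0 ≤ Lh * cpm := by positivity
  have hLip : ∀ y z v, eucNorm ((J y - J z) *ᵥ v) ≤ LJ * eucNorm (y - z) * eucNorm v :=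
    fun y z v => (eucNorm_mulVec_le_opNorm2 _ v).trans
      (mul_le_mul_of_nonneg_right (hJLip y z) (eucNorm_nonneg v))
  have hM : 0 < 4 * Lh * max σ LJ * cpm * cnp ^ 2 := by positivity
  have hLJM : Lh * cpm * LJ * cnp ^ 2 ≤ Lh * max σ LJ * cpm * cnp ^ 2 := by
    linarith [mul_le_mul_of_nonneg_left (le_max_right σ LJ) (by positivity : 0 ≤ Lh * cpm * cnp ^ 2)]
  have hcnp2 : cnp ≤ cnp ^ 2 := by nlinarith
  have hαθ : (1 - α) * θ ≤ 1 := mul_le_one₀ (by linarith) hθ0.le hθ1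
  refine ncard_le_ceil_logb_of_halving (u := fun k => τ k * Real.sqrt n)
    (by have := sub_pos.2 hα1; positivity)
    (fun k => by dsimp only; rw [hrun.tau_succ k]; split_ifs <;> ring) fun k hk hP => ?_
  obtain ⟨hxk, hτk, hτΔ, hΔs⟩ := hrun.invariant hτ0 k
  have hΔk : 0 < Δ k := (mul_pos hτk hsn).trans_le hτΔ
  rw [div_lt_iff₀ hM]
  rcases hP with hU1 | ⟨hη, hρ, hU3⟩
  · have := lt_mul_of_eta_lt_of_lt_psi hp hK0 hK (by positivity) hcnp hJ hLJ.le hLip hxk hτk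
      (hΔk.trans_le hΔs) (hT k hk) hU1
    have hτsn := mul_pos hτk hsn
    linarith [mul_le_mul_of_nonneg_right hαθ hε.le, mul_pos hM hτsn,
      mul_le_mul_of_nonneg_right hLJM hτsn.le,
      mul_le_mul_of_nonneg_left hcnp2 (mul_nonneg hK0 (mul_nonneg hLJ.le hτsn.le))]
  · obtain ⟨-, hd, -, hθd, hρdef, -⟩ := (hrun.2.2.2.2.2 k).resolve_left fun h => not_le.2 h.1 hη
    have := lt_mul_of_ratio_lt hΩcv hconv hp hK0 hK hcnp1 hcnp hJ hLJ.le hLip hα1.le hθ0 hε hxk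
      hτk hΔk hΔs hτΔ hη hd hθd (hρdef ▸ hρ)
    linarith [mul_le_mul_of_nonneg_right hLJM hΔk.le, mul_lt_mul_of_pos_left hU3 hM]

/-- Lemma 3.5: bound on the number of iterations of types U¹ and U³. -/
theorem stmt11
    {n m : ℕ} (hn : 1 ≤ n) (hm : 1 ≤ m) (p : ℝ≥0∞) (hp : 1 ≤ p)
    (Ω : Set (Fin n → ℝ)) (hΩne : Ω.Nonempty) (hΩcl : IsClosed Ω) (hΩcv : Convex ℝ Ω)
    (F : (Fin n → ℝ) → (Fin m → ℝ)) (J : (Fin n → ℝ) → Matrix (Fin m) (Fin n) ℝ)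
    (hJ : ∀ y, HasFDerivAt F (LinearMap.toContinuousLinearMap (Matrix.mulVecLin (J y))) y)
    (LJ : ℝ) (hLJ : 0 < LJ)
    (hJLip : ∀ y z, opNorm2 (J y - J z) ≤ LJ * eucNorm (y - z))
    (h : (Fin m → ℝ) → ℝ) (hconv : ConvexOn ℝ Set.univ h)
    (Lh : ℝ) (hLh : 0 < Lh)
    (hhLip : ∀ z w, |h z - h w| ≤ Lh * pNorm p (z - w))
    (cnp cpm : ℝ) (hcnp1 : 1 ≤ cnp) (hcpm1 : 1 ≤ cpm)
    (hcnp : ∀ v : Fin n → ℝ, eucNorm v ≤ cnp * pNorm p v)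
    (hcpm : ∀ z : Fin m → ℝ, pNorm p z ≤ cpm * eucNorm z)
    (ε σ α θ Δstar : ℝ) (hε : 0 < ε) (hσ : 0 < σ)
    (hα0 : 0 < α) (hα1 : α < 1) (hθ0 : 0 < θ) (hθ1 : θ ≤ 1)
    (x : ℕ → Fin n → ℝ) (τ Δ : ℕ → ℝ) (A : ℕ → Matrix (Fin m) (Fin n) ℝ)
    (d : ℕ → Fin n → ℝ) (ρ : ℕ → ℝ)
    (hrun : TRFDrun Ω F h p Lh cpm cnp ε σ α θ Δstar x τ Δ A d ρ)
    (T : ℕ) (hT2 : 2 ≤ T) (hT : ∀ k < T, ε < psi Ω F h J p Δstar (x k)) :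
    (Set.ncard {k : ℕ | k < T ∧
        (eta Ω F h p Δstar (x k) (A k) < ε / 2 ∨
         (ε / 2 ≤ eta Ω F h p Δstar (x k) (A k) ∧ ρ k < α ∧
          Δ k / 2 < τ k * Real.sqrt n))} : ℤ) ≤
      ⌈|Real.logb 2 (τ 0 * Real.sqrt n /
          ((1 - α) * θ * ε / (4 * Lh * max σ LJ * cpm * cnp ^ 2)))|⌉ :=
  stmt11_general hn p hp Ω hΩcv F J hJ LJ hLJ hJLip h hconv Lh hLh hhLip cnp cpm hcnp1 hcpm1 hcnp
    hcpm ε σ α θ Δstar hε hσ hα0 hα1 hθ0 hθ1 x τ Δ A d ρ hrun T hT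
end
end

section
/- Assume each component F_i is convex, h is monotone, and f has a global minimizer x* on Ω with D_0 := sup{‖x − x*‖_p : x ∈ Ω, f(x) ≤ f(x_0)} < ∞, for some fixed x_0 ∈ Ω. Then for every x ∈ Ω with f(x) ≤ f(x_0) and every r ≥ D_0, one has ψ_{p,r}(x) ≥ (f(x) − f(x*)) / r. -/
open scoped ENNReal

noncomputable section

/-!
Convexity of each component `F i` makes the linearisation `F x + J x (y - x)` a
componentwise lower bound for `F y`, so by monotonicity of `h` the step `s = x* - x`
has model value at most `f x*`. It is feasible for `ψ_{p,r}(x)` because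
`‖x* - x‖_p ≤ D₀ ≤ r`, and the model is bounded below on the feasible set (a bounded
set mapped affinely, then monotonically), so the infimum is at most `f x*`.
-/
theorem ConvexOn.add_fderiv_sub_le {E : Type*} [NormedAddCommGroup E] [NormedSpace ℝ E]
    {s : Set E} {f : E → ℝ} {f' : E →L[ℝ] ℝ} {x y : E} (hf : ConvexOn ℝ s f) (hx : x ∈ s)
    (hy : y ∈ s) (hf' : HasFDerivAt f f' x) : f x + f' (y - x) ≤ f y := by
  let ℓ : ℝ →ᵃ[ℝ] E := AffineMap.lineMap x y
  have hconv : ConvexOn ℝ (ℓ ⁻¹' s) (f ∘ ℓ) := hf.comp_affineMap ℓ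
  have hderiv : HasDerivAt (f ∘ ℓ) (f' (y - x)) 0 := by
    have hf'' : HasFDerivAt f f' (ℓ 0) := by simpa [ℓ] using hf'
    exact hf''.comp_hasDerivAt (0 : ℝ) AffineMap.hasDerivAt_lineMap
  have hslope := hconv.le_slope_of_hasDerivAt (x := 0) (y := 1) (by simpa [ℓ] using hx)
    (by simpa [ℓ] using hy) one_pos hderiv
  simp only [slope_def_field, Function.comp_apply, ℓ, AffineMap.lineMap_apply_zero,
    AffineMap.lineMap_apply_one, sub_zero, div_one] at hslope
  linarith

theorem add_fderiv_sub_le_of_convexOn_apply {E ι : Type*} [NormedAddCommGroup E]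
    [NormedSpace ℝ E] [Fintype ι] {s : Set E} {F : E → ι → ℝ} {F' : E →L[ℝ] ι → ℝ} {x y : E}
    (hF : ∀ i, ConvexOn ℝ s (fun z => F z i)) (hx : x ∈ s) (hy : y ∈ s)
    (hF' : HasFDerivAt F F' x) : F x + F' (y - x) ≤ F y := fun i =>
  (hF i).add_fderiv_sub_le hx hy (hasFDerivAt_pi'.1 hF' i)

theorem pNorm_nonneg (p : ℝ≥0∞) {n : ℕ} (x : Fin n → ℝ) : 0 ≤ pNorm p x := by
  unfold pNorm
  split_ifs
  · exact Real.iSup_nonneg fun i => abs_nonneg (x i)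
  · positivity

theorem norm_le_pNorm {p : ℝ≥0∞} (hp : p ≠ 0) {n : ℕ} (x : Fin n → ℝ) : ‖x‖ ≤ pNorm p x := by
  refine (pi_norm_le_iff_of_nonneg (pNorm_nonneg p x)).2 fun i => ?_
  rw [Real.norm_eq_abs]
  unfold pNorm
  split_ifs with hinf
  · exact le_ciSup (f := fun j => |x j|) (Set.finite_range _).bddAbove i
  · have hq : 0 < p.toReal := ENNReal.toReal_pos hp hinf
    calc |x i| = (|x i| ^ p.toReal) ^ (1 / p.toReal) := by
          rw [one_div, Real.rpow_rpow_inv (abs_nonneg _) hq.ne']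
      _ ≤ (∑ j, |x j| ^ p.toReal) ^ (1 / p.toReal) := by
          gcongr
          exact Finset.single_le_sum (f := fun j => |x j| ^ p.toReal) (fun j _ => by positivity)
            (Finset.mem_univ i)

theorem pNorm_sub_comm (p : ℝ≥0∞) {n : ℕ} (x y : Fin n → ℝ) :
    pNorm p (x - y) = pNorm p (y - x) := by
  simp only [pNorm, Pi.sub_apply, abs_sub_comm (x _)]

theorem sub_div_le_psi {n m : ℕ} {Ω : Set (Fin n → ℝ)} {F : (Fin n → ℝ) → (Fin m → ℝ)}
    {h : (Fin m → ℝ) → ℝ} {J : (Fin n → ℝ) → Matrix (Fin m) (Fin n) ℝ} {p : ℝ≥0∞}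
    (hp : p ≠ 0) (hmono : Monotone h) {r : ℝ} (hr : 0 ≤ r) {x s : Fin n → ℝ} (hs : x + s ∈ Ω)
    (hsr : pNorm p s ≤ r) :
    (h (F x) - h (F x + (J x).mulVec s)) / r ≤ psi Ω F h J p r x := by
  set S := {s | x + s ∈ Ω ∧ pNorm p s ≤ r}
  have hS : S ⊆ Metric.closedBall 0 r := fun t ht =>
    mem_closedBall_zero_iff.2 ((norm_le_pNorm hp t).trans ht.2)
  have haffine : BddBelow ((fun t => F x + (J x).mulVec t) '' S) :=
    ((isCompact_closedBall 0 r).image (by fun_prop)).isBounded.bddBelow.mono (Set.image_mono hS)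
  have hbdd : BddBelow ((fun t => h (F x + (J x).mulVec t)) '' S) := by
    simpa only [Set.image_image] using hmono.map_bddBelow haffine
  rw [psi, div_eq_inv_mul]
  gcongr
  exact csInf_le hbdd ⟨s, ⟨hs, hsr⟩, rfl⟩

theorem stmt14_general
    {n m : ℕ} (p : ℝ≥0∞) (hp : 1 ≤ p)
    (Ω : Set (Fin n → ℝ))
    (F : (Fin n → ℝ) → (Fin m → ℝ)) (J : (Fin n → ℝ) → Matrix (Fin m) (Fin n) ℝ)
    (hJ : ∀ y, HasFDerivAt F (LinearMap.toContinuousLinearMap (Matrix.mulVecLin (J y))) y)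
    (h : (Fin m → ℝ) → ℝ)
    (hFconv : ∀ i, ConvexOn ℝ Set.univ (fun y => F y i))
    (hmono : ∀ u v : Fin m → ℝ, (∀ i, u i ≤ v i) → h u ≤ h v)
    (x₀ : Fin n → ℝ)
    (xstar : Fin n → ℝ) (hxstarΩ : xstar ∈ Ω)
    (D₀ : ℝ) (hD₀ : ∀ y ∈ Ω, h (F y) ≤ h (F x₀) → pNorm p (y - xstar) ≤ D₀) :
    ∀ x ∈ Ω, h (F x) ≤ h (F x₀) → ∀ r : ℝ, D₀ ≤ r →
      (h (F x) - h (F xstar)) / r ≤ psi Ω F h J p r x := by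
  intro x hx hfx r hr
  have hdist : pNorm p (xstar - x) ≤ r := by
    rw [pNorm_sub_comm]
    exact (hD₀ x hx hfx).trans hr
  have hr₀ : 0 ≤ r := (pNorm_nonneg p _).trans hdist
  have hstep : x + (xstar - x) ∈ Ω := by rwa [add_sub_cancel]
  have hlin : F x + (J x).mulVec (xstar - x) ≤ F xstar := by
    simpa using add_fderiv_sub_le_of_convexOn_apply hFconv (Set.mem_univ x)
      (Set.mem_univ xstar) (hJ x)
  calc (h (F x) - h (F xstar)) / r
      ≤ (h (F x) - h (F x + (J x).mulVec (xstar - x))) / r := by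
        gcongr
        exact hmono _ _ hlin
    _ ≤ psi Ω F h J p r x :=
        sub_div_le_psi (one_pos.trans_le hp).ne' (fun u v => hmono u v) hr₀ hstep hdist

/-- Lemma 3.9: ψ bounds the scaled functional residual in the convex case. -/
theorem stmt14
    {n m : ℕ} (hn : 1 ≤ n) (hm : 1 ≤ m) (p : ℝ≥0∞) (hp : 1 ≤ p)
    (Ω : Set (Fin n → ℝ)) (hΩne : Ω.Nonempty) (hΩcl : IsClosed Ω) (hΩcv : Convex ℝ Ω)
    (F : (Fin n → ℝ) → (Fin m → ℝ)) (J : (Fin n → ℝ) → Matrix (Fin m) (Fin n) ℝ)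
    (hJ : ∀ y, HasFDerivAt F (LinearMap.toContinuousLinearMap (Matrix.mulVecLin (J y))) y)
    (LJ : ℝ) (hLJ : 0 < LJ)
    (hJLip : ∀ y z, opNorm2 (J y - J z) ≤ LJ * eucNorm (y - z))
    (h : (Fin m → ℝ) → ℝ) (hcont : Continuous h)
    (hFconv : ∀ i, ConvexOn ℝ Set.univ (fun y => F y i))
    (hmono : ∀ u v : Fin m → ℝ, (∀ i, u i ≤ v i) → h u ≤ h v)
    (x₀ : Fin n → ℝ) (hx₀ : x₀ ∈ Ω)
    (xstar : Fin n → ℝ) (hxstarΩ : xstar ∈ Ω)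
    (hxstarmin : ∀ y ∈ Ω, h (F xstar) ≤ h (F y))
    (D₀ : ℝ) (hD₀ : ∀ y ∈ Ω, h (F y) ≤ h (F x₀) → pNorm p (y - xstar) ≤ D₀) :
    ∀ x ∈ Ω, h (F x) ≤ h (F x₀) → ∀ r : ℝ, D₀ ≤ r →
      (h (F x) - h (F xstar)) / r ≤ psi Ω F h J p r x :=
  stmt14_general p hp Ω F J hJ h hFconv hmono x₀ xstar hxstarΩ D₀ hD₀
end
end
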